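/- Let n ≥ 1, d ≥ 1, k ≥ 1, and let δ be a ℂ-derivation of ℂ[x₀,…,xₙ] = MvPolynomial (Fin (n+1)) ℂ such that δ(xᵢ) is homogeneous of degree d for every i. Suppose δ admits no rational first integral, i.e., there is no pair of polynomials u, v, linearly independent over ℂ, with v·δ(u) = u·δ(v). Then for every finite set S of pairwise non-associated irreducible homogeneous polynomials of degree k, each δ-invariant (f ∣ δ(f) for every f ∈ S), one has k·|S| ≤ k·C(n+k,k) + (d−1)·C(C(n+k,k), 2). -/

import Mathlib

/-!
Let `w` be a basis of the `N = C(n+k, k)` forms of degree `k` and `W` the determinant of the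
matrix `(δ^j w_i)`, `0 ≤ i, j < N`. Since `δ` raises degrees by `d - 1`, `W` is a form of degree
`N k + (d - 1) C(N, 2)`. If `W = 0`, the classical Wronskian argument yields a `ℂ`-linear relation
among the `w_i` or a non-constant quotient of polynomials killed by `δ`; both are excluded, so
`W ≠ 0`. An invariant form `f = ∑ c_i w_i` may replace a row of the matrix with `c_i ≠ 0`, and
then every entry `δ^j f` of that row is divisible by `f`, so `f ∣ W`. The elements of `S` are
pairwise coprime, hence their product, of degree `k |S|`, divides `W`.
-/

open MvPolynomial

namespace Derivation

variable {R A : Type*} [CommRing R] [CommRing A] [Algebra R A] (D : Derivation R A A)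

def wronskianMatrix {N : ℕ} (w : Fin N → A) : Matrix (Fin N) (Fin N) A :=
  Matrix.of fun i j => D^[j] (w i)

def wronskian {N : ℕ} (w : Fin N → A) : A :=
  (D.wronskianMatrix w).det

lemma iterate_eq_pow (j : ℕ) : (⇑D)^[j] = ⇑((D : Module.End R A) ^ j) :=
  (Module.End.coe_pow _ j).symm

lemma dvd_iterate_of_dvd_apply {f : A} (hf : f ∣ D f) (j : ℕ) : f ∣ D^[j] f := by
  induction j with
  | zero => exact dvd_rfl
  | succ j ih =>
    obtain ⟨g, hg⟩ := ih
    rw [Function.iterate_succ_apply', hg, leibniz, smul_eq_mul, smul_eq_mul]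
    exact dvd_add (dvd_mul_right f _) (dvd_mul_of_dvd_right hf g)

section IsDomain

variable [IsDomain A]

lemma eq_zero_of_sum_mul_iterate_eq_zero {m : ℕ} {w : Fin (m + 1) → A}
    (hW : D.wronskian (w ∘ Fin.castSucc) ≠ 0) {b : Fin (m + 1) → A} (hb : b (Fin.last m) = 0)
    (h : ∀ j : Fin m, ∑ i, b i * D^[j] (w i) = 0) : b = 0 := by
  by_contra hb0
  refine hW (Matrix.exists_vecMul_eq_zero_iff.mp ⟨b ∘ Fin.castSucc, fun h0 => hb0 ?_, ?_⟩)
  · ext i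
    induction i using Fin.lastCases with
    | last => exact hb
    | cast i => exact congrFun h0 i
  · ext j
    simpa [Fin.sum_univ_castSucc, hb, Matrix.vecMul, dotProduct, wronskianMatrix] using h j

/-- `a i₀ * D (a i) = a i * D (a i₀)` says that `a i / a i₀` is a constant of `D`; stating it in `A`
avoids extending `D` to the fraction field. -/
theorem exists_sum_mul_eq_zero_of_wronskian_eq_zero {N : ℕ} (w : Fin N → A)
    (hW : D.wronskian w = 0) :
    ∃ (a : Fin N → A) (i₀ : Fin N), a i₀ ≠ 0 ∧ (∀ i, a i₀ * D (a i) = a i * D (a i₀)) ∧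
      ∑ i, a i * w i = 0 := by
  induction N with
  | zero => simp [wronskian] at hW
  | succ m ih =>
    by_cases hW' : D.wronskian (w ∘ Fin.castSucc) = 0
    · obtain ⟨a, i₀, ha, hconst, hsum⟩ := ih _ hW'
      refine ⟨Fin.snoc a 0, i₀.castSucc, by simpa using ha, fun i => ?_, ?_⟩
      · induction i using Fin.lastCases with
        | last => simp
        | cast i => simpa using hconst i
      · simpa [Fin.sum_univ_castSucc] using hsum
    obtain ⟨v, hv, hvM⟩ := Matrix.exists_vecMul_eq_zero_iff.mpr hW
    have hrel : ∀ j : ℕ, j < m + 1 → ∑ i, v i * D^[j] (w i) = 0 := fun j hj => by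
      simpa [Matrix.vecMul, dotProduct, wronskianMatrix] using congrFun hvM ⟨j, hj⟩
    have hlast : v (Fin.last m) ≠ 0 := fun h0 =>
      hv (D.eq_zero_of_sum_mul_iterate_eq_zero hW' h0 fun j => hrel j (by omega))
    -- differentiating the relations of order `j < m` leaves `∑ D (v i) * D^[j] (w i) = 0`
    have hderiv : ∀ j : Fin m, ∑ i, D (v i) * D^[j] (w i) = 0 := fun j => by
      have := congrArg D (hrel j (by omega))
      simp only [map_sum, leibniz, smul_eq_mul, Finset.sum_add_distrib,
        ← Function.iterate_succ_apply' D, map_zero] at this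
      rw [hrel (j + 1) (by omega), zero_add] at this
      rw [← this]
      exact Finset.sum_congr rfl fun i _ => mul_comm _ _
    have hconst := D.eq_zero_of_sum_mul_iterate_eq_zero hW'
      (b := fun i => v (Fin.last m) * D (v i) - v i * D (v (Fin.last m))) (sub_self _)
      fun j => calc
        _ = v (Fin.last m) * ∑ i, D (v i) * D^[j] (w i)
            - D (v (Fin.last m)) * ∑ i, v i * D^[j] (w i) := by
          rw [Finset.mul_sum, Finset.mul_sum, ← Finset.sum_sub_distrib]
          exact Finset.sum_congr rfl fun i _ => by ring
        _ = 0 := by rw [hderiv j, hrel j (by omega)]; ring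
    refine ⟨v, Fin.last m, hlast, fun i => sub_eq_zero.mp (congrFun hconst i), ?_⟩
    simpa using hrel 0 (by omega)

end IsDomain

section Field

variable {K A : Type*} [Field K] [CommRing A] [Algebra K A] (D : Derivation K A A)

/-- `u / v` is a non-constant rational function annihilated by `D`, written without fractions. -/
def HasRationalFirstIntegral : Prop :=
  ∃ u v : A, LinearIndependent K ![u, v] ∧ v * D u = u * D v

theorem dvd_wronskian_of_mem_span {N : ℕ} (w : Fin N → A) {f : A}
    (hf : f ∈ Submodule.span K (Set.range w)) (hf0 : f ≠ 0) (hfD : f ∣ D f) :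
    f ∣ D.wronskian w := by
  obtain ⟨c, rfl⟩ := (Submodule.mem_span_range_iff_exists_fun K).mp hf
  obtain ⟨i₀, hi₀⟩ : ∃ i, c i ≠ 0 := by
    by_contra! h
    simp [h] at hf0
  choose g hg using D.dvd_iterate_of_dvd_apply hfD
  have hrow : ∑ i, algebraMap K A (c i) • D.wronskianMatrix w i =
      (∑ i, c i • w i) • fun j : Fin N => g j := by
    ext j
    simp only [Finset.sum_apply, Pi.smul_apply, smul_eq_mul]
    rw [← hg, iterate_eq_pow, map_sum]
    simp only [LinearMap.map_smul]
    simp only [wronskianMatrix, Matrix.of_apply, Algebra.smul_def, iterate_eq_pow]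
  have hdet := Matrix.det_updateRow_sum (D.wronskianMatrix w) i₀ fun i => algebraMap K A (c i)
  rw [hrow, Matrix.det_updateRow_smul, smul_eq_mul] at hdet
  exact ((Ne.isUnit hi₀).map (algebraMap K A)).dvd_mul_left.mp ⟨_, hdet.symm⟩

variable [IsDomain A]

theorem wronskian_ne_zero (hD : ¬ D.HasRationalFirstIntegral) {N : ℕ} {w : Fin N → A}
    (hw : LinearIndependent K w) : D.wronskian w ≠ 0 := by
  intro hW
  obtain ⟨a, i₀, ha, hconst, hsum⟩ := D.exists_sum_mul_eq_zero_of_wronskian_eq_zero w hW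
  have hprop : ∀ i, ∃ c : K, c • a i₀ = a i := fun i => by
    by_contra! h
    exact hD ⟨a i₀, a i, (LinearIndependent.pair_iff' ha).mpr h, (hconst i).symm⟩
  choose c hc using hprop
  have hcw : ∑ i, c i • w i = 0 := by
    refine (mul_eq_zero.mp ?_).resolve_left ha
    rw [Finset.mul_sum, ← hsum]
    refine Finset.sum_congr rfl fun i _ => ?_
    rw [← hc i, Algebra.smul_def, Algebra.smul_def]
    ring
  have hc₀ := hc i₀
  rw [Fintype.linearIndependent_iff.mp hw c hcw i₀, zero_smul] at hc₀
  exact ha hc₀.symm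

end Field

end Derivation

namespace MvPolynomial

variable {σ R : Type*} [CommRing R]

theorem derivation_eq_sum_mul_pderiv [Fintype σ]
    (D : Derivation R (MvPolynomial σ R) (MvPolynomial σ R)) (p : MvPolynomial σ R) :
    D p = ∑ i, D (X i) * pderiv i p := by
  classical
  have hsum : ∀ q, (∑ i, D (X i) • pderiv i) q = ∑ i, D (X i) * pderiv i q := fun q => by
    rw [← Derivation.coeFnAddMonoidHom_apply, map_sum, Finset.sum_apply]
    simp [Derivation.coeFnAddMonoidHom_apply]
  rw [← hsum, ← derivation_ext (D₁ := D) (D₂ := ∑ i, D (X i) • pderiv i) fun j => by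
    simp [hsum, pderiv_X, Pi.single_apply]]

theorem IsHomogeneous.derivation [Fintype σ]
    {D : Derivation R (MvPolynomial σ R) (MvPolynomial σ R)} {d m : ℕ}
    (hD : ∀ i, (D (X i)).IsHomogeneous d) (hd : 1 ≤ d) {p : MvPolynomial σ R}
    (hp : p.IsHomogeneous m) : (D p).IsHomogeneous (m + (d - 1)) := by
  obtain _ | m := m
  · rw [← totalDegree_zero_iff_isHomogeneous, totalDegree_eq_zero_iff_eq_C] at hp
    rw [hp, derivation_C]
    exact isHomogeneous_zero _ _ _
  · rw [derivation_eq_sum_mul_pderiv]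
    refine IsHomogeneous.sum _ _ _ fun i _ => ?_
    convert (hD i).mul hp.pderiv using 1
    omega

theorem IsHomogeneous.iterate_derivation [Fintype σ]
    {D : Derivation R (MvPolynomial σ R) (MvPolynomial σ R)} {d m : ℕ}
    (hD : ∀ i, (D (X i)).IsHomogeneous d) (hd : 1 ≤ d) {p : MvPolynomial σ R}
    (hp : p.IsHomogeneous m) (j : ℕ) : (D^[j] p).IsHomogeneous (m + j * (d - 1)) := by
  induction j with
  | zero => simpa using hp
  | succ j ih =>
    rw [Function.iterate_succ_apply', add_one_mul, ← add_assoc]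
    exact ih.derivation hD hd

theorem isHomogeneous_det {ι : Type*} [Fintype ι] [DecidableEq ι]
    {M : Matrix ι ι (MvPolynomial σ R)} {deg : ι → ℕ}
    (h : ∀ i j, (M i j).IsHomogeneous (deg j)) : M.det.IsHomogeneous (∑ j, deg j) := by
  rw [Matrix.det_apply]
  refine IsHomogeneous.sum _ _ _ fun τ _ => ?_
  rw [Units.smul_def]
  exact Submodule.smul_of_tower_mem (homogeneousSubmodule σ R _) _
    (IsHomogeneous.prod _ _ _ fun j _ => h (τ j) j)

theorem isHomogeneous_wronskian [Fintype σ]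
    {D : Derivation R (MvPolynomial σ R) (MvPolynomial σ R)} {d : ℕ}
    (hD : ∀ i, (D (X i)).IsHomogeneous d) (hd : 1 ≤ d) {N k : ℕ}
    {w : Fin N → MvPolynomial σ R} (hw : ∀ i, (w i).IsHomogeneous k) :
    (D.wronskian w).IsHomogeneous (N * k + (d - 1) * N.choose 2) := by
  have hdeg : ∑ j : Fin N, (k + j * (d - 1)) = N * k + (d - 1) * N.choose 2 := by
    rw [Finset.sum_add_distrib, ← Finset.sum_mul, Fin.sum_univ_eq_sum_range (·),
      Finset.sum_range_id, Nat.choose_two_right]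
    simp [mul_comm]
  rw [← hdeg]
  exact isHomogeneous_det fun i j => (hw i).iterate_derivation hD hd j

variable (σ R) in
theorem exists_linearIndependent_span_eq_homogeneousSubmodule [Fintype σ] [DecidableEq σ]
    (k : ℕ) : ∃ w : Fin ((Fintype.card σ + k - 1).choose k) → MvPolynomial σ R,
      LinearIndependent R w ∧ Submodule.span R (Set.range w) = homogeneousSubmodule σ R k := by
  let s := (Finset.univ : Finset σ).finsuppAntidiag k
  let e := (s.equivFinOfCardEq
    (by rw [Finset.card_finsuppAntidiag_nat_eq_choose, Finset.card_univ])).symm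
  refine ⟨fun i => monomial (e i : σ →₀ ℕ) 1, ?_, ?_⟩
  · have := (basisMonomials σ R).linearIndependent.comp _
      (Subtype.val_injective.comp e.injective)
    rwa [coe_basisMonomials] at this
  · rw [homogeneousSubmodule_eq_finsupp_supported, AddMonoidAlgebra.supported_eq_span_single]
    have hs : ∀ x : σ →₀ ℕ, x ∈ s ↔ x.degree = k := fun x => by
      simp [s, Finsupp.degree_eq_sum]
    congr 1
    ext p
    constructor
    · rintro ⟨i, rfl⟩
      exact ⟨e i, (hs _).mp (e i).2, rfl⟩
    · rintro ⟨x, hx, rfl⟩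
      exact ⟨e.symm ⟨x, (hs x).mpr hx⟩, by simp only [Equiv.apply_symm_apply]; rfl⟩

end MvPolynomial

theorem Finset.prod_dvd_of_pairwise_not_associated {α : Type*} [CommMonoid α]
    [DecompositionMonoid α]
    {S : Finset α} {z : α} (hirr : ∀ f ∈ S, Irreducible f)
    (hassoc : ∀ f ∈ S, ∀ g ∈ S, f ≠ g → ¬ Associated f g) (hdvd : ∀ f ∈ S, f ∣ z) :
    ∏ f ∈ S, f ∣ z :=
  Finset.prod_dvd_of_isRelPrime
    (fun f hf g hg hfg => (hirr f hf).isRelPrime_iff_not_dvd.mpr fun h =>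
      hassoc f hf g hg hfg (((hirr f hf).dvd_irreducible_iff_associated (hirr g hg)).mp h))
    hdvd

theorem card_invariant_bound_of_no_first_integral_general (n d k : ℕ)
    (hd : 1 ≤ d)
    (δ : Derivation ℂ (MvPolynomial (Fin (n + 1)) ℂ) (MvPolynomial (Fin (n + 1)) ℂ))
    (hδ : ∀ i, (δ (MvPolynomial.X i)).IsHomogeneous d)
    (hnofi : ¬ ∃ u v : MvPolynomial (Fin (n + 1)) ℂ,
        LinearIndependent ℂ ![u, v] ∧ v * δ u = u * δ v)
    (S : Finset (MvPolynomial (Fin (n + 1)) ℂ))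
    (hirr : ∀ f ∈ S, Irreducible f)
    (hhom : ∀ f ∈ S, f.IsHomogeneous k)
    (hinv : ∀ f ∈ S, f ∣ δ f)
    (hassoc : ∀ f ∈ S, ∀ g ∈ S, f ≠ g → ¬ Associated f g) :
    k * S.card ≤ k * (n + k).choose k + (d - 1) * ((n + k).choose k).choose 2 := by
  classical
  obtain ⟨w, hw_indep, hw_span⟩ :=
    exists_linearIndependent_span_eq_homogeneousSubmodule (Fin (n + 1)) ℂ k
  have hN : (Fintype.card (Fin (n + 1)) + k - 1).choose k = (n + k).choose k := by
    rw [Fintype.card_fin, Nat.add_right_comm, Nat.add_sub_cancel]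
  have hW : δ.wronskian w ≠ 0 := δ.wronskian_ne_zero hnofi hw_indep
  have hw_hom : ∀ i, (w i).IsHomogeneous k := fun i => by
    rw [← mem_homogeneousSubmodule, ← hw_span]
    exact Submodule.subset_span (Set.mem_range_self i)
  have hW_hom := isHomogeneous_wronskian hδ hd hw_hom
  have hdvd : ∏ f ∈ S, f ∣ δ.wronskian w :=
    Finset.prod_dvd_of_pairwise_not_associated hirr hassoc fun f hf =>
      δ.dvd_wronskian_of_mem_span w (hw_span ▸ hhom f hf) (hirr f hf).ne_zero (hinv f hf)
  have hprod : (∏ f ∈ S, f).totalDegree = S.card * k := by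
    refine ((IsHomogeneous.prod S id (fun _ => k) hhom).totalDegree ?_).trans (by simp)
    exact Finset.prod_ne_zero_iff.mpr fun f hf => (hirr f hf).ne_zero
  calc k * S.card = (∏ f ∈ S, f).totalDegree := by rw [hprod, mul_comm]
    _ ≤ (δ.wronskian w).totalDegree := totalDegree_le_of_dvd_of_isDomain hdvd hW
    _ = _ := by rw [hW_hom.totalDegree hW, hN, mul_comm]

/-- Main Theorem 1 of the paper, specialized to `X = ℙⁿ` and hypersurfaces of degree `k`:
if `δ` (a degree-`d` foliation) admits no rational first integral, then for every finite set
`S` of pairwise non-associated irreducible homogeneous `δ`-invariant polynomials of degree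
`k` one has `k * |S| ≤ k * C(n+k, k) + (d-1) * C(C(n+k, k), 2)`. -/
theorem card_invariant_bound_of_no_first_integral (n d k : ℕ)
    (hn : 1 ≤ n) (hd : 1 ≤ d) (hk : 1 ≤ k)
    (δ : Derivation ℂ (MvPolynomial (Fin (n + 1)) ℂ) (MvPolynomial (Fin (n + 1)) ℂ))
    (hδ : ∀ i, (δ (MvPolynomial.X i)).IsHomogeneous d)
    (hnofi : ¬ ∃ u v : MvPolynomial (Fin (n + 1)) ℂ,
        LinearIndependent ℂ ![u, v] ∧ v * δ u = u * δ v)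
    (S : Finset (MvPolynomial (Fin (n + 1)) ℂ))
    (hirr : ∀ f ∈ S, Irreducible f)
    (hhom : ∀ f ∈ S, f.IsHomogeneous k)
    (hinv : ∀ f ∈ S, f ∣ δ f)
    (hassoc : ∀ f ∈ S, ∀ g ∈ S, f ≠ g → ¬ Associated f g) :
    k * S.card ≤ k * (n + k).choose k + (d - 1) * ((n + k).choose k).choose 2 :=
  card_invariant_bound_of_no_first_integral_general n d k hd δ hδ hnofi S hirr hhom hinv hassoc
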